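/- arXiv:2510.22843 — 2 statements merged into one kernel-verified Lean document; each statement's English description precedes it below -/
import Mathlib

section
/- Presentation of the connected sum over K: let K be a field, I ⊂ R = K[x_1,…,x_n] and J ⊂ S = K[y_1,…,y_m] proper homogeneous ideals, A = R/I, B = S/J, with augmentations π_A : A → K, π_B : B → K. Suppose f ∈ R and g ∈ S are homogeneous of the same positive degree with f ∉ I and g ∉ J, and their cosets m_A = f + I and m_B = g + J are socle elements (x_i·m_A = 0 in A for all i, and y_j·m_B = 0 in B for all j). Then the K-span of (m_A, −m_B) is an ideal of the fiber product A ×_K B = {(a,b) : π_A(a) = π_B(b)}, and the quotient ring (A ×_K B) / K·(m_A, −m_B) is isomorphic as a K-algebra to T / (I·T + J·T + (x_i y_j : 1 ≤ i ≤ n, 1 ≤ j ≤ m) + (f − g)), where T = K[x_1,…,x_n,y_1,…,y_m]. -/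
open MvPolynomial

/-- `c` is a monomial of the quotient ring `R/I`: a nonzero coset of a monomial. -/
def MonClass {σ K : Type*} [Field K] (I : Ideal (MvPolynomial σ K))
    (c : MvPolynomial σ K ⧸ I) : Prop :=
  c ≠ 0 ∧ ∃ a : σ →₀ ℕ, c = Ideal.Quotient.mk I (monomial a (1 : K))

/-- The monomial poset `M_{R/I}`: the set of monomials of the quotient ring `R/I`. -/
def MonPoset {σ K : Type*} [Field K] (I : Ideal (MvPolynomial σ K)) : Type _ :=
  {c : MvPolynomial σ K ⧸ I // MonClass I c}

/-- The divisibility partial order on the monomial poset: `f ∣ g` iff `f h = g`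
for some monomial `h` of the quotient ring. -/
def monDvd {σ K : Type*} [Field K] (I : Ideal (MvPolynomial σ K))
    (f g : MonPoset I) : Prop :=
  ∃ h : MvPolynomial σ K ⧸ I, MonClass I h ∧ f.1 * h = g.1

/-- `I` is a homogeneous ideal: it contains all homogeneous components
of its elements. -/
def IsHomogIdeal {σ K : Type*} [Field K] (I : Ideal (MvPolynomial σ K)) : Prop :=
  ∀ f ∈ I, ∀ d : ℕ, homogeneousComponent d f ∈ I

/-- `I` is a monomial ideal: with any polynomial it contains all monomials
occurring in it. -/
def IsMonomialIdeal {σ K : Type*} [Field K] (I : Ideal (MvPolynomial σ K)) : Prop :=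
  ∀ f ∈ I, ∀ a ∈ f.support, monomial a (1 : K) ∈ I

/-- The coset of `1`: the least element of the monomial poset of a proper quotient. -/
noncomputable def oneMon {σ K : Type*} [Field K] (I : Ideal (MvPolynomial σ K)) (hI : I ≠ ⊤) :
    MonPoset I :=
  ⟨Ideal.Quotient.mk I 1, by
    refine ⟨?_, 0, by simp⟩
    rw [Ne, Ideal.Quotient.eq_zero_iff_mem]
    exact (Ideal.ne_top_iff_one I).mp hI⟩

open MvPolynomial

/-- The fiber product `A ×_K B` of two `K`-algebras relative to augmentations
`πA : A → K` and `πB : B → K`: the subalgebra `{(a,b) : πA a = πB b}` of `A × B`. -/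
def fiberProd {K A B : Type*} [CommRing K] [CommRing A] [CommRing B]
    [Algebra K A] [Algebra K B] (πA : A →ₐ[K] K) (πB : B →ₐ[K] K) :
    Subalgebra K (A × B) where
  carrier := {p | πA p.1 = πB p.2}
  mul_mem' := by
    intro a b ha hb
    simp only [Set.mem_setOf_eq, Prod.fst_mul, Prod.snd_mul, map_mul] at *
    rw [ha, hb]
  add_mem' := by
    intro a b ha hb
    simp only [Set.mem_setOf_eq, Prod.fst_add, Prod.snd_add, map_add] at *
    rw [ha, hb]
  algebraMap_mem' := by
    intro k
    show πA (algebraMap K A k) = πB (algebraMap K B k)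
    simp

/-- The quotient ring of a subalgebra `S` by the principal ideal generated by `z ∈ S`. -/
noncomputable def quotBySpan {K A : Type*} [CommRing K] [CommRing A] [Algebra K A]
    (S : Subalgebra K A) (z : S) : Type _ :=
  S ⧸ Ideal.span ({z} : Set S)

noncomputable instance quotBySpan.instCommRing {K A : Type*} [CommRing K] [CommRing A]
    [Algebra K A] (S : Subalgebra K A) (z : S) : CommRing (quotBySpan S z) :=
  inferInstanceAs (CommRing (S ⧸ Ideal.span ({z} : Set S)))

noncomputable instance quotBySpan.instAlgebra {K A : Type*} [CommRing K] [CommRing A]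
    [Algebra K A] (S : Subalgebra K A) (z : S) : Algebra K (quotBySpan S z) :=
  inferInstanceAs (Algebra K (S ⧸ Ideal.span ({z} : Set S)))

/-!
The map `T = K[x, y] → A × B`, `p ↦ (p(x, 0), p(0, y))`, lands in and is onto the fiber product
`A ×_K B`. Its kernel is `I·T + J·T + (x_i y_j)`: modulo the mixed monomials every `p` is
congruent to `p(x, 0) + p(0, y) - p(0, 0)`. As it sends `f - g` to `(m_A, -m_B)`, dividing by
this element on both sides gives the presentation. The span of `(m_A, -m_B)` is an ideal
because every polynomial `q` acts on a socle element as multiplication by the scalar `q(0)`.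
-/

namespace MvPolynomial

variable {σ τ K : Type*}

section CommSemiring

variable [CommSemiring K]

theorem algHom_mul_eq_constantCoeff_smul {R : Type*} [CommSemiring R] [Algebra K R]
    (φ : MvPolynomial σ K →ₐ[K] R) {a : R} (ha : ∀ i, φ (X i) * a = 0)
    (p : MvPolynomial σ K) :
    φ p * a = constantCoeff p • a := by
  induction p using MvPolynomial.induction_on with
  | C c => simp [Algebra.smul_def]
  | add p q hp hq => simp [add_mul, hp, hq, add_smul]
  | mul_X p i _ => simp [mul_assoc, ha]

theorem IsHomogeneous.constantCoeff_eq_zero {f : MvPolynomial σ K} {e : ℕ}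
    (hf : f.IsHomogeneous e) (he : e ≠ 0) : constantCoeff f = 0 := by
  rw [constantCoeff_eq]
  exact hf.coeff_eq_zero (by simpa using he.symm)

variable (σ τ K) in
noncomputable def projLeft : MvPolynomial (σ ⊕ τ) K →ₐ[K] MvPolynomial σ K :=
  aeval (Sum.elim X 0)

variable (σ τ K) in
noncomputable def projRight : MvPolynomial (σ ⊕ τ) K →ₐ[K] MvPolynomial τ K :=
  aeval (Sum.elim 0 X)

@[simp]
theorem projLeft_X (s : σ ⊕ τ) :
    projLeft σ τ K (X s) = Sum.elim X (0 : τ → MvPolynomial σ K) s :=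
  aeval_X _ s

@[simp]
theorem projRight_X (s : σ ⊕ τ) :
    projRight σ τ K (X s) = Sum.elim (0 : σ → MvPolynomial τ K) X s :=
  aeval_X _ s

@[simp]
theorem projLeft_rename_inl (q : MvPolynomial σ K) : projLeft σ τ K (rename Sum.inl q) = q := by
  rw [projLeft, aeval_rename]
  exact aeval_X_left_apply q

@[simp]
theorem projLeft_rename_inr (r : MvPolynomial τ K) :
    projLeft σ τ K (rename Sum.inr r) = C (constantCoeff r) := by
  rw [projLeft, aeval_rename]
  exact aeval_zero r

@[simp]
theorem projRight_rename_inl (q : MvPolynomial σ K) :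
    projRight σ τ K (rename Sum.inl q) = C (constantCoeff q) := by
  rw [projRight, aeval_rename]
  exact aeval_zero q

@[simp]
theorem projRight_rename_inr (r : MvPolynomial τ K) :
    projRight σ τ K (rename Sum.inr r) = r := by
  rw [projRight, aeval_rename]
  exact aeval_X_left_apply r

@[simp]
theorem constantCoeff_projLeft (p : MvPolynomial (σ ⊕ τ) K) :
    constantCoeff (projLeft σ τ K p) = constantCoeff p := by
  induction p using MvPolynomial.induction_on with
  | C c => simp [projLeft]
  | add p q hp hq => simp [hp, hq]
  | mul_X p s _ => cases s <;> simp

@[simp]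
theorem constantCoeff_projRight (p : MvPolynomial (σ ⊕ τ) K) :
    constantCoeff (projRight σ τ K p) = constantCoeff p := by
  induction p using MvPolynomial.induction_on with
  | C c => simp [projRight]
  | add p q hp hq => simp [hp, hq]
  | mul_X p s _ => cases s <;> simp

end CommSemiring

section MixedIdeal

variable [CommRing K]

@[simp]
theorem quotient_mk_C (I : Ideal (MvPolynomial σ K)) (c : K) :
    Ideal.Quotient.mk I (C c) = algebraMap K _ c :=
  Ideal.Quotient.mk_algebraMap K I c

variable (σ τ K) in
noncomputable def mixedIdeal : Ideal (MvPolynomial (σ ⊕ τ) K) :=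
  Ideal.span {p | ∃ i j, p = X (Sum.inl i) * X (Sum.inr j)}

theorem X_inl_mul_X_inr_mem_mixedIdeal (i : σ) (j : τ) :
    X (Sum.inl i) * X (Sum.inr j) ∈ mixedIdeal σ τ K :=
  Ideal.subset_span ⟨i, j, rfl⟩

theorem add_C_constantCoeff_sub_mem_mixedIdeal (p : MvPolynomial (σ ⊕ τ) K) :
    p + C (constantCoeff p) -
        (rename Sum.inl (projLeft σ τ K p) + rename Sum.inr (projRight σ τ K p)) ∈
      mixedIdeal σ τ K := by
  rw [← Ideal.Quotient.eq]
  induction p using MvPolynomial.induction_on with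
  | C c => simp
  | add p q hp hq => simp only [map_add] at *; linear_combination hp + hq
  -- Modulo the mixed monomials, a variable of one side acts on polynomials in the other side
  -- through their constant term.
  | mul_X p s hp =>
    cases s with
    | inl i =>
      have hact := algHom_mul_eq_constantCoeff_smul
        ((Ideal.Quotient.mkₐ K (mixedIdeal σ τ K)).comp (rename Sum.inr))
        (a := Ideal.Quotient.mk _ (X (Sum.inl i))) (fun j ↦ by
          simpa [← map_mul, mul_comm, Ideal.Quotient.eq_zero_iff_mem] using
            X_inl_mul_X_inr_mem_mixedIdeal (K := K) i j)
        (projRight σ τ K p)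
      simp [Algebra.smul_def] at hp hact ⊢
      linear_combination Ideal.Quotient.mk _ (X (Sum.inl i)) * hp + hact
    | inr j =>
      have hact := algHom_mul_eq_constantCoeff_smul
        ((Ideal.Quotient.mkₐ K (mixedIdeal σ τ K)).comp (rename Sum.inl))
        (a := Ideal.Quotient.mk _ (X (Sum.inr j))) (fun i ↦ by
          simpa [← map_mul, Ideal.Quotient.eq_zero_iff_mem] using
            X_inl_mul_X_inr_mem_mixedIdeal (K := K) i j)
        (projLeft σ τ K p)
      simp [Algebra.smul_def] at hp hact ⊢
      linear_combination Ideal.Quotient.mk _ (X (Sum.inr j)) * hp + hact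

end MixedIdeal

section FiberProduct

variable [CommRing K] {I : Ideal (MvPolynomial σ K)} {J : Ideal (MvPolynomial τ K)}
  {πA : (MvPolynomial σ K ⧸ I) →ₐ[K] K} {πB : (MvPolynomial τ K ⧸ J) →ₐ[K] K}

theorem constantCoeff_eq_zero_of_mem (hπA : ∀ q, πA (Ideal.Quotient.mk I q) = constantCoeff q)
    {q : MvPolynomial σ K} (hq : q ∈ I) : constantCoeff q = 0 := by
  rw [← hπA, Ideal.Quotient.eq_zero_iff_mem.mpr hq, map_zero]

theorem mul_eq_smul_of_mem_fiberProd (hπA : ∀ q, πA (Ideal.Quotient.mk I q) = constantCoeff q)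
    (hπB : ∀ r, πB (Ideal.Quotient.mk J r) = constantCoeff r)
    {a : MvPolynomial σ K ⧸ I} {b : MvPolynomial τ K ⧸ J}
    (ha : ∀ i, Ideal.Quotient.mk I (X i) * a = 0) (hb : ∀ j, Ideal.Quotient.mk J (X j) * b = 0)
    {p : (MvPolynomial σ K ⧸ I) × (MvPolynomial τ K ⧸ J)} (hp : p ∈ fiberProd πA πB) :
    p * (a, b) = πA p.1 • (a, b) := by
  obtain ⟨⟨q, r⟩, rfl⟩ :=
    (Ideal.Quotient.mk_surjective.prodMap Ideal.Quotient.mk_surjective) p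
  have hqr : constantCoeff q = constantCoeff r := by
    rw [← hπA, ← hπB]; exact hp
  ext
  · simpa [hπA] using algHom_mul_eq_constantCoeff_smul (Ideal.Quotient.mkₐ K I) ha q
  · simpa [hπA, hqr] using algHom_mul_eq_constantCoeff_smul (Ideal.Quotient.mkₐ K J) hb r

variable (πA πB) in
noncomputable def toFiberProd (hπA : ∀ q, πA (Ideal.Quotient.mk I q) = constantCoeff q)
    (hπB : ∀ r, πB (Ideal.Quotient.mk J r) = constantCoeff r) :
    MvPolynomial (σ ⊕ τ) K →ₐ[K] fiberProd πA πB :=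
  AlgHom.codRestrict
    (((Ideal.Quotient.mkₐ K I).comp (projLeft σ τ K)).prod
      ((Ideal.Quotient.mkₐ K J).comp (projRight σ τ K)))
    (fiberProd πA πB) fun p ↦ by
      change πA (Ideal.Quotient.mk I _) = πB (Ideal.Quotient.mk J _)
      simp [hπA, hπB]

variable (hπA : ∀ q, πA (Ideal.Quotient.mk I q) = constantCoeff q)
  (hπB : ∀ r, πB (Ideal.Quotient.mk J r) = constantCoeff r)

@[simp]
theorem coe_toFiberProd (p : MvPolynomial (σ ⊕ τ) K) :
    (toFiberProd πA πB hπA hπB p : (MvPolynomial σ K ⧸ I) × (MvPolynomial τ K ⧸ J)) =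
      (Ideal.Quotient.mk I (projLeft σ τ K p), Ideal.Quotient.mk J (projRight σ τ K p)) :=
  rfl

theorem toFiberProd_surjective : Function.Surjective (toFiberProd πA πB hπA hπB) := by
  rintro ⟨⟨a, b⟩, hab⟩
  obtain ⟨q, rfl⟩ := Ideal.Quotient.mk_surjective a
  obtain ⟨r, rfl⟩ := Ideal.Quotient.mk_surjective b
  have hqr : constantCoeff q = constantCoeff r := by
    rw [← hπA, ← hπB]; exact hab
  refine ⟨rename Sum.inl q + rename Sum.inr r - C (constantCoeff q), Subtype.ext ?_⟩
  simp [hqr]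

theorem ker_toFiberProd : RingHom.ker (toFiberProd πA πB hπA hπB) =
    Ideal.map (rename Sum.inl).toRingHom I ⊔ Ideal.map (rename Sum.inr).toRingHom J ⊔
      mixedIdeal σ τ K := by
  apply le_antisymm
  · intro p hp
    simp only [RingHom.mem_ker, Subtype.ext_iff, coe_toFiberProd, ZeroMemClass.coe_zero,
      Prod.ext_iff, Prod.fst_zero, Prod.snd_zero, Ideal.Quotient.eq_zero_iff_mem] at hp
    obtain ⟨hpI, hpJ⟩ := hp
    have hc : constantCoeff p = 0 := by
      rw [← constantCoeff_projLeft]; exact constantCoeff_eq_zero_of_mem hπA hpI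
    have hmixed := add_C_constantCoeff_sub_mem_mixedIdeal p
    rw [hc, map_zero, add_zero] at hmixed
    rw [← add_sub_cancel
      (rename Sum.inl (projLeft σ τ K p) + rename Sum.inr (projRight σ τ K p)) p]
    exact add_mem (add_mem (Ideal.mem_sup_left (Ideal.mem_sup_left (Ideal.mem_map_of_mem _ hpI)))
      (Ideal.mem_sup_left (Ideal.mem_sup_right (Ideal.mem_map_of_mem _ hpJ))))
      (Ideal.mem_sup_right hmixed)
  · refine sup_le (sup_le ?_ ?_) ?_
    · rw [Ideal.map_le_iff_le_comap]
      intro q hq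
      simp only [Ideal.mem_comap, RingHom.mem_ker, Subtype.ext_iff, coe_toFiberProd]
      simp [Ideal.Quotient.eq_zero_iff_mem, hq, constantCoeff_eq_zero_of_mem hπA hq]
    · rw [Ideal.map_le_iff_le_comap]
      intro r hr
      simp only [Ideal.mem_comap, RingHom.mem_ker, Subtype.ext_iff, coe_toFiberProd]
      simp [Ideal.Quotient.eq_zero_iff_mem, hr, constantCoeff_eq_zero_of_mem hπB hr]
    · rw [mixedIdeal, Ideal.span_le]
      rintro _ ⟨i, j, rfl⟩
      simp only [SetLike.mem_coe, RingHom.mem_ker, map_mul, Subtype.ext_iff]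
      simp

end FiberProduct

end MvPolynomial

noncomputable def AlgHom.quotientSpanSingletonEquivOfSurjective {R A B : Type*} [CommRing R]
    [CommRing A] [CommRing B] [Algebra R A] [Algebra R B] (ψ : A →ₐ[R] B)
    (hψ : Function.Surjective ψ) (x : A) :
    (B ⧸ Ideal.span {ψ x}) ≃ₐ[R] A ⧸ (RingHom.ker ψ ⊔ Ideal.span {x}) :=
  (Ideal.quotientKerAlgEquivOfSurjective (f := (Ideal.Quotient.mkₐ R (Ideal.span {ψ x})).comp ψ)
      (Ideal.Quotient.mk_surjective.comp hψ)).symm.trans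
    (Ideal.quotientEquivAlgOfEq R (by
      ext y
      rw [RingHom.mem_ker, AlgHom.comp_apply, Ideal.Quotient.mkₐ_eq_mk,
        Ideal.Quotient.eq_zero_iff_mem, ← Ideal.mem_comap, ← Set.image_singleton,
        ← Ideal.map_span, Ideal.comap_map_of_surjective' _ hψ, sup_comm]))

theorem connectedSum_presentation_general {K : Type*} [Field K] (n m : ℕ)
    (I : Ideal (MvPolynomial (Fin n) K)) (J : Ideal (MvPolynomial (Fin m) K))
    (πA : (MvPolynomial (Fin n) K ⧸ I) →ₐ[K] K)
    (πB : (MvPolynomial (Fin m) K ⧸ J) →ₐ[K] K)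
    (hπA : ∀ f : MvPolynomial (Fin n) K,
      πA (Ideal.Quotient.mk I f) = constantCoeff f)
    (hπB : ∀ g : MvPolynomial (Fin m) K,
      πB (Ideal.Quotient.mk J g) = constantCoeff g)
    (f : MvPolynomial (Fin n) K) (g : MvPolynomial (Fin m) K) (e : ℕ) (he : 0 < e)
    (hf : f.IsHomogeneous e) (hg : g.IsHomogeneous e)
    (hsocf : ∀ i : Fin n, X i * f ∈ I) (hsocg : ∀ j : Fin m, X j * g ∈ J) :
    ∃ hz : ((Ideal.Quotient.mk I f, -(Ideal.Quotient.mk J g)) :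
        (MvPolynomial (Fin n) K ⧸ I) × (MvPolynomial (Fin m) K ⧸ J)) ∈
          fiberProd πA πB,
      (∀ p ∈ fiberProd πA πB, ∃ c : K,
        p * (Ideal.Quotient.mk I f, -(Ideal.Quotient.mk J g)) =
          c • (Ideal.Quotient.mk I f, -(Ideal.Quotient.mk J g))) ∧
      Nonempty ((quotBySpan (fiberProd πA πB)
            ⟨(Ideal.Quotient.mk I f, -(Ideal.Quotient.mk J g)), hz⟩) ≃ₐ[K]
        (MvPolynomial (Fin n ⊕ Fin m) K ⧸
          (Ideal.map (rename (Sum.inl : Fin n → Fin n ⊕ Fin m)).toRingHom I ⊔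
           Ideal.map (rename (Sum.inr : Fin m → Fin n ⊕ Fin m)).toRingHom J ⊔
           Ideal.span {p : MvPolynomial (Fin n ⊕ Fin m) K |
              ∃ i j, p = X (Sum.inl i) * X (Sum.inr j)} ⊔
           Ideal.span {rename (Sum.inl : Fin n → Fin n ⊕ Fin m) f -
              rename (Sum.inr : Fin m → Fin n ⊕ Fin m) g}))) := by
  have hf₀ := hf.constantCoeff_eq_zero he.ne'
  have hg₀ := hg.constantCoeff_eq_zero he.ne'
  have hz : (Ideal.Quotient.mk I f, -Ideal.Quotient.mk J g) ∈ fiberProd πA πB := by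
    change πA _ = πB _
    simp [hπA, hπB, hf₀, hg₀]
  have hf_socle (i : Fin n) : Ideal.Quotient.mk I (X i) * Ideal.Quotient.mk I f = 0 := by
    rw [← map_mul, Ideal.Quotient.eq_zero_iff_mem]; exact hsocf i
  have hg_socle (j : Fin m) : Ideal.Quotient.mk J (X j) * -Ideal.Quotient.mk J g = 0 := by
    rw [← map_neg, ← map_mul, Ideal.Quotient.eq_zero_iff_mem, mul_neg]
    exact neg_mem (hsocg j)
  refine ⟨hz, fun p hp ↦ ⟨πA p.1,
    mul_eq_smul_of_mem_fiberProd hπA hπB hf_socle hg_socle hp⟩, ?_⟩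
  have hψ : toFiberProd πA πB hπA hπB (rename Sum.inl f - rename Sum.inr g) = ⟨_, hz⟩ :=
    Subtype.ext (by simp [hf₀, hg₀])
  rw [← hψ]
  exact ⟨(AlgHom.quotientSpanSingletonEquivOfSurjective (B := fiberProd πA πB) _
    (toFiberProd_surjective hπA hπB) _).trans
    (Ideal.quotientEquivAlgOfEq K (by rw [ker_toFiberProd]; rfl))⟩

/-- **Presentation of the connected sum over `K`.** Let `I ⊂ K[x_1,…,x_n]` and
`J ⊂ K[y_1,…,y_m]` be proper homogeneous ideals, `A = K[x]/I`, `B = K[y]/J`, with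
augmentations `πA, πB`. Suppose `f` and `g` are homogeneous of the same positive
degree `e`, `f ∉ I`, `g ∉ J`, and the cosets `m_A = f + I`, `m_B = g + J` are socle
elements. Then `z = (m_A, -m_B)` lies in the fiber product `A ×_K B`, its `K`-span
is an ideal of `A ×_K B`, and the quotient `(A ×_K B)/K·(m_A, -m_B)` is isomorphic
as a `K`-algebra to `T/(I·T + J·T + (x_i y_j) + (f - g))` with
`T = K[x_1,…,x_n,y_1,…,y_m]`. -/
theorem connectedSum_presentation {K : Type*} [Field K] (n m : ℕ)
    (I : Ideal (MvPolynomial (Fin n) K)) (J : Ideal (MvPolynomial (Fin m) K))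
    (hIproper : I ≠ ⊤) (hJproper : J ≠ ⊤)
    (hIhom : IsHomogIdeal I) (hJhom : IsHomogIdeal J)
    (πA : (MvPolynomial (Fin n) K ⧸ I) →ₐ[K] K)
    (πB : (MvPolynomial (Fin m) K ⧸ J) →ₐ[K] K)
    (hπA : ∀ f : MvPolynomial (Fin n) K,
      πA (Ideal.Quotient.mk I f) = constantCoeff f)
    (hπB : ∀ g : MvPolynomial (Fin m) K,
      πB (Ideal.Quotient.mk J g) = constantCoeff g)
    (f : MvPolynomial (Fin n) K) (g : MvPolynomial (Fin m) K) (e : ℕ) (he : 0 < e)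
    (hf : f.IsHomogeneous e) (hg : g.IsHomogeneous e)
    (hfI : f ∉ I) (hgJ : g ∉ J)
    (hsocf : ∀ i : Fin n, X i * f ∈ I) (hsocg : ∀ j : Fin m, X j * g ∈ J) :
    ∃ hz : ((Ideal.Quotient.mk I f, -(Ideal.Quotient.mk J g)) :
        (MvPolynomial (Fin n) K ⧸ I) × (MvPolynomial (Fin m) K ⧸ J)) ∈
          fiberProd πA πB,
      (∀ p ∈ fiberProd πA πB, ∃ c : K,
        p * (Ideal.Quotient.mk I f, -(Ideal.Quotient.mk J g)) =
          c • (Ideal.Quotient.mk I f, -(Ideal.Quotient.mk J g))) ∧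
      Nonempty ((quotBySpan (fiberProd πA πB)
            ⟨(Ideal.Quotient.mk I f, -(Ideal.Quotient.mk J g)), hz⟩) ≃ₐ[K]
        (MvPolynomial (Fin n ⊕ Fin m) K ⧸
          (Ideal.map (rename (Sum.inl : Fin n → Fin n ⊕ Fin m)).toRingHom I ⊔
           Ideal.map (rename (Sum.inr : Fin m → Fin n ⊕ Fin m)).toRingHom J ⊔
           Ideal.span {p : MvPolynomial (Fin n ⊕ Fin m) K |
              ∃ i j, p = X (Sum.inl i) * X (Sum.inr j)} ⊔
           Ideal.span {rename (Sum.inl : Fin n → Fin n ⊕ Fin m) f -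
              rename (Sum.inr : Fin m → Fin n ⊕ Fin m) g}))) :=
  connectedSum_presentation_general n m I J πA πB hπA hπB f g e he hf hg hsocf hsocg
end

section
/- The product of two 4-element chains (the poset {0,1,2,3}² with componentwise order, ranked by the sum of coordinates) is a Macaulay poset, and there exists a total order on it witnessing the Macaulay property with respect to which the poset is additive. -/
/-- `q` covers `p` with respect to the order relation `le`:
`p < q` and there is no element strictly between them. -/
def CoversR {α : Type*} (le : α → α → Prop) (p q : α) : Prop :=
  le p q ∧ p ≠ q ∧ ∀ r, le p r → le r q → r = p ∨ r = q

/-- The upper shadow of `A`: all elements covering some element of `A`. -/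
def UpperShadowR {α : Type*} (le : α → α → Prop) (A : Set α) : Set α :=
  {q | ∃ a ∈ A, CoversR le a q}

/-- `r` is a rank function for the order relation `le`: minimal elements have
rank `0` and ranks increase by one along covers. -/
def IsRankFunctionR {α : Type*} (le : α → α → Prop) (r : α → ℕ) : Prop :=
  (∀ p, (∀ q, le q p → q = p) → r p = 0) ∧
    ∀ p q, CoversR le p q → r q = r p + 1

/-- `S` is an initial segment (a set of largest elements) of the level `L`
with respect to the total order `t`. -/
def IsInitialSegIn {α : Type*} (t : α → α → Prop) (L S : Set α) : Prop :=
  S ⊆ L ∧ ∀ a ∈ S, ∀ b ∈ L, t a b → b ∈ S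

/-- The poset given by `le`, ranked by `r`, satisfies the Macaulay conditions with
respect to the total order `t`: for every rank `d` and every `A ⊆ P_d`, the initial
segment `S` of `P_d` of size `|A|` has `|∇S| ≤ |∇A|`, and `∇S` is again an initial
segment (of `P_{d+1}`). -/
def MacaulayWith {α : Type*} (le : α → α → Prop) (r : α → ℕ) (t : α → α → Prop) : Prop :=
  ∀ d : ℕ, ∀ A : Set α, A ⊆ {p | r p = d} →
    ∀ S : Set α, IsInitialSegIn t {p | r p = d} S → S.ncard = A.ncard →
      (UpperShadowR le S).ncard ≤ (UpperShadowR le A).ncard ∧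
        IsInitialSegIn t {p | r p = d + 1} (UpperShadowR le S)

/-- The poset given by `le` with rank function `r` (with finite rank levels) is
a Macaulay poset: some total order witnesses the Macaulay conditions. -/
def IsMacaulayPosetR {α : Type*} (le : α → α → Prop) (r : α → ℕ) : Prop :=
  IsRankFunctionR le r ∧ (∀ d : ℕ, {p | r p = d}.Finite) ∧
    ∃ t : α → α → Prop, IsLinearOrder α t ∧ MacaulayWith le r t

/-- The poset given by `le` is a Macaulay poset. -/
def IsMacaulayPoset {α : Type*} (le : α → α → Prop) : Prop :=
  ∃ r : α → ℕ, IsMacaulayPosetR le r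

/-- `A` is a segment of the level `L` with respect to the total order `t`:
whenever `a, b ∈ A` and `c ∈ L` lies between them in the total order, `c ∈ A`. -/
def IsSegmentIn {α : Type*} (t : α → α → Prop) (L A : Set α) : Prop :=
  A ⊆ L ∧ ∀ a ∈ A, ∀ b ∈ A, ∀ c ∈ L, t b c → t c a → c ∈ A

/-- `C` is a final segment (a set of smallest elements) of the level `L`
with respect to the total order `t`. -/
def IsFinalSegIn {α : Type*} (t : α → α → Prop) (L C : Set α) : Prop :=
  C ⊆ L ∧ ∀ a ∈ C, ∀ b ∈ L, t b a → b ∈ C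

/-- The new shadow of a segment `A` of the level `L`: the upper shadow of `A` minus
the upper shadow of the set `B` of all elements of `L` strictly larger (in the total
order `t`) than every element of `A`. -/
def NewShadow {α : Type*} (le : α → α → Prop) (t : α → α → Prop) (L A : Set α) : Set α :=
  UpperShadowR le A \ UpperShadowR le {b | b ∈ L ∧ ∀ a ∈ A, t a b ∧ b ≠ a}

/-- The ranked poset `(le, r)` with total order `t` is additive:
(1) initial segments have new shadows at least as large as those of arbitrary segments
of the same rank and size, and (2) arbitrary segments have new shadows at least as
large as those of final segments of the same rank and size. -/
def IsAdditiveWith {α : Type*} (le : α → α → Prop) (r : α → ℕ) (t : α → α → Prop) : Prop :=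
  ∀ d : ℕ,
    (∀ A B : Set α, IsInitialSegIn t {p | r p = d} A → IsSegmentIn t {p | r p = d} B →
      A.ncard = B.ncard →
        (NewShadow le t {p | r p = d} B).ncard ≤ (NewShadow le t {p | r p = d} A).ncard) ∧
    (∀ B C : Set α, IsSegmentIn t {p | r p = d} B → IsFinalSegIn t {p | r p = d} C →
      B.ncard = C.ncard →
        (NewShadow le t {p | r p = d} C).ncard ≤ (NewShadow le t {p | r p = d} B).ncard)

/-!
Everything is finite: the poset has sixteen elements and each rank level at most four, so once
subsets of a level are identified with finsets, the Macaulay and additivity conditions are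
finitely many inclusions and cardinality comparisons, which the kernel checks by evaluation.
Only the ranks that actually occur need checking; the other levels are empty.

The Macaulay order is the Clements–Lindström order: elements are compared by rank first and,
within a level, by their first coordinate, so the initial segments of a level are the sets
`{(a, b) | a ≥ k}`.
-/

open Finset

section Finite

variable {α : Type*} [Fintype α] {r : α → ℕ} {d : ℕ}

def rankLevel (r : α → ℕ) (d : ℕ) : Finset α := univ.filter (r · = d)

@[simp, norm_cast]
lemma coe_rankLevel : (rankLevel r d : Set α) = {p | r p = d} := by
  ext; simp [rankLevel]

lemma exists_finset_subset_rankLevel {A : Set α} (hA : A ⊆ {p | r p = d}) :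
    ∃ F ⊆ rankLevel r d, (F : Set α) = A :=
  ⟨A.toFinite.toFinset, by simpa [← Finset.coe_subset] using hA, by simp⟩

lemma eq_empty_of_subset_fiber {A : Set α} (hd : d ∉ univ.image r) (hA : A ⊆ {p | r p = d}) :
    A = ∅ :=
  Set.subset_empty_iff.1 fun p hp => hd (hA hp ▸ mem_image_of_mem r (mem_univ p))

variable [DecidableEq α]

instance CoversR.decidableRel (le : α → α → Prop) [DecidableRel le] :
    DecidableRel (CoversR le) :=
  fun _ _ => by unfold CoversR; infer_instance

instance IsInitialSegIn.decidableCoe (t : α → α → Prop) [DecidableRel t] (L S : Finset α) :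
    Decidable (IsInitialSegIn t (L : Set α) (S : Set α)) :=
  decidable_of_iff (S ⊆ L ∧ ∀ a ∈ S, ∀ b ∈ L, t a b → b ∈ S) (by simp [IsInitialSegIn])

instance IsSegmentIn.decidableCoe (t : α → α → Prop) [DecidableRel t] (L S : Finset α) :
    Decidable (IsSegmentIn t (L : Set α) (S : Set α)) :=
  decidable_of_iff (S ⊆ L ∧ ∀ a ∈ S, ∀ b ∈ S, ∀ c ∈ L, t b c → t c a → c ∈ S)
    (by simp [IsSegmentIn])

instance IsFinalSegIn.decidableCoe (t : α → α → Prop) [DecidableRel t] (L S : Finset α) :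
    Decidable (IsFinalSegIn t (L : Set α) (S : Set α)) :=
  decidable_of_iff (S ⊆ L ∧ ∀ a ∈ S, ∀ b ∈ L, t b a → b ∈ S) (by simp [IsFinalSegIn])

def upperShadow (le : α → α → Prop) [DecidableRel le] (F : Finset α) : Finset α :=
  univ.filter fun q => ∃ a ∈ F, CoversR le a q

def newShadow (le t : α → α → Prop) [DecidableRel le] [DecidableRel t] (L F : Finset α) :
    Finset α :=
  upperShadow le F \ upperShadow le (L.filter fun b => ∀ a ∈ F, t a b ∧ b ≠ a)

variable {le t : α → α → Prop} [DecidableRel le] [DecidableRel t]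

@[simp, norm_cast]
lemma coe_upperShadow (F : Finset α) : (upperShadow le F : Set α) = UpperShadowR le F := by
  ext; simp [upperShadow, UpperShadowR]

@[simp, norm_cast]
lemma coe_newShadow (L F : Finset α) :
    (newShadow le t L F : Set α) = NewShadow le t L F := by
  ext; simp [newShadow, NewShadow, UpperShadowR, upperShadow]

omit [DecidableRel t] in
theorem macaulayWith_of_forall_finset
    (h : ∀ d ∈ univ.image r, ∀ F ⊆ rankLevel r d, ∀ S ⊆ rankLevel r d,
      IsInitialSegIn t ↑(rankLevel r d) ↑S → #S = #F →
        #(upperShadow le S) ≤ #(upperShadow le F) ∧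
          IsInitialSegIn t ↑(rankLevel r (d + 1)) ↑(upperShadow le S)) :
    MacaulayWith le r t := by
  intro d A hA S hS hcard
  by_cases hd : d ∈ univ.image r
  · obtain ⟨F, hF, rfl⟩ := exists_finset_subset_rankLevel hA
    obtain ⟨G, hG, rfl⟩ := exists_finset_subset_rankLevel hS.1
    rw [← coe_rankLevel] at hS
    simpa [← coe_upperShadow] using h d hd F hF G hG hS (by simpa using hcard)
  · obtain rfl := eq_empty_of_subset_fiber hd hS.1
    have : UpperShadowR le (∅ : Set α) = ∅ := by simp [UpperShadowR]
    simp [this, IsInitialSegIn]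

theorem isAdditiveWith_of_forall_finset
    (h₁ : ∀ d ∈ univ.image r, ∀ A ⊆ rankLevel r d, ∀ B ⊆ rankLevel r d,
      IsInitialSegIn t ↑(rankLevel r d) ↑A → IsSegmentIn t ↑(rankLevel r d) ↑B → #A = #B →
        #(newShadow le t (rankLevel r d) B) ≤ #(newShadow le t (rankLevel r d) A))
    (h₂ : ∀ d ∈ univ.image r, ∀ B ⊆ rankLevel r d, ∀ C ⊆ rankLevel r d,
      IsSegmentIn t ↑(rankLevel r d) ↑B → IsFinalSegIn t ↑(rankLevel r d) ↑C → #B = #C →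
        #(newShadow le t (rankLevel r d) C) ≤ #(newShadow le t (rankLevel r d) B)) :
    IsAdditiveWith le r t := by
  intro d
  by_cases hd : d ∈ univ.image r
  · constructor <;> intro A B hA hB hcard <;>
      obtain ⟨F, hF, rfl⟩ := exists_finset_subset_rankLevel hA.1 <;>
      obtain ⟨G, hG, rfl⟩ := exists_finset_subset_rankLevel hB.1 <;>
      rw [← coe_rankLevel] at hA hB ⊢ <;>
      simp only [← coe_newShadow, Set.ncard_coe_finset] at hcard ⊢
    exacts [h₁ d hd F hF G hG hA hB hcard, h₂ d hd F hF G hG hA hB hcard]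
  · refine ⟨fun A B hA hB _ => ?_, fun A B hA hB _ => ?_⟩ <;>
      rw [eq_empty_of_subset_fiber hd hA.1, eq_empty_of_subset_fiber hd hB.1]

end Finite

lemma coversR_le_iff_covBy {α : Type*} [PartialOrder α] {p q : α} :
    CoversR (· ≤ ·) p q ↔ p ⋖ q := by
  rw [covBy_iff_lt_and_eq_or_eq, lt_iff_le_and_ne, and_assoc]
  rfl

theorem isRankFunctionR_fin_prod (m n : ℕ) :
    IsRankFunctionR (· ≤ · : Fin m × Fin n → Fin m × Fin n → Prop)
      (fun p => (p.1 : ℕ) + (p.2 : ℕ)) := by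
  refine ⟨fun p hmin => ?_, fun ⟨a, b⟩ ⟨c, d⟩ hcov => ?_⟩
  · rw [← hmin (⟨0, p.1.pos⟩, ⟨0, p.2.pos⟩) ⟨Nat.zero_le _, Nat.zero_le _⟩]
    rfl
  · simp only [coversR_le_iff_covBy, Prod.mk_covBy_mk_iff, Fin.covBy_iff,
      Nat.covBy_iff_add_one_eq, Fin.ext_iff] at hcov
    dsimp only
    omega

namespace Chain4Sq

def rank (p : Fin 4 × Fin 4) : ℕ := p.1 + p.2

def key (p : Fin 4 × Fin 4) : ℕ := 4 * rank p + p.1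

def order : Fin 4 × Fin 4 → Fin 4 × Fin 4 → Prop := Function.onFun (· ≤ ·) key

instance : DecidableRel order := fun p q => inferInstanceAs (Decidable (key p ≤ key q))

lemma key_injective : Function.Injective key := by decide

lemma isLinearOrder_order : IsLinearOrder (Fin 4 × Fin 4) order :=
  key_injective.isLinearOrder_onFun _

lemma macaulayWith_order : MacaulayWith (· ≤ ·) rank order :=
  macaulayWith_of_forall_finset (by decide +kernel)

lemma isAdditiveWith_order : IsAdditiveWith (· ≤ ·) rank order :=
  isAdditiveWith_of_forall_finset (by decide +kernel) (by decide +kernel)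

end Chain4Sq

open Chain4Sq in
/-- The product of two 4-element chains (the poset `{0,1,2,3}²` with componentwise
order, ranked by the sum of coordinates) is a Macaulay poset, and some total order
witnessing the Macaulay property also makes it additive. -/
theorem chain4_product_macaulay_additive :
    IsRankFunctionR (· ≤ · : Fin 4 × Fin 4 → Fin 4 × Fin 4 → Prop)
      (fun p => (p.1 : ℕ) + (p.2 : ℕ)) ∧
    (∀ d : ℕ, {p : Fin 4 × Fin 4 | (p.1 : ℕ) + (p.2 : ℕ) = d}.Finite) ∧
    ∃ t : Fin 4 × Fin 4 → Fin 4 × Fin 4 → Prop, IsLinearOrder (Fin 4 × Fin 4) t ∧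
      MacaulayWith (· ≤ ·) (fun p => (p.1 : ℕ) + (p.2 : ℕ)) t ∧
      IsAdditiveWith (· ≤ ·) (fun p => (p.1 : ℕ) + (p.2 : ℕ)) t :=
  ⟨isRankFunctionR_fin_prod 4 4, fun _ => Set.toFinite _, order, isLinearOrder_order,
    macaulayWith_order, isAdditiveWith_order⟩
end
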